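/- Let d ≥ 1, let Σ be a symmetric positive definite d×d real matrix, let γ ∈ ℝ^d with γ_k > 0 for each k, and let Γ = diag(γ_1²/4, …, γ_d²/4). Let μ, ω, ω' ∈ ℝ^d. Then ∫_{ℝ^d} exp(−∑_{k=1}^d ((w_k − ω_k)² + (w_k − ω'_k)²)/γ_k²) · p_{μ,Σ}(w) dw = det((Γ + Σ)·Γ⁻¹)^(−1/2) · exp(−(1/8)·(ω − ω')ᵀΓ⁻¹(ω − ω')) · exp(−(1/2)·((ω + ω')/2 − μ)ᵀ(Γ + Σ)⁻¹((ω + ω')/2 − μ)). -/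

import Mathlib

/-!
Completing the square in `w`, the kernel equals `exp (-(ω - ω')ᵀ Γ⁻¹ (ω - ω') / 8)` times an
unnormalised Gaussian density with mean `(ω + ω') / 2` and covariance `Γ`. The integral of a product
of Gaussian densities `p_{m,S₁} · p_{μ,S₂}` is `p_{μ,S₁+S₂}(m)`: completing the square once more,
with precision matrix `M = S₁⁻¹ + S₂⁻¹`, leaves the Gaussian integral
`∫ exp (-xᵀ M x / 2) dx = √((2π)^d / det M)`, computed by the substitution `y = M^{1/2} x`, and the
determinants combine through `S₂ (S₁⁻¹ + S₂⁻¹) S₁ = S₁ + S₂`.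
-/

open MeasureTheory Real Matrix

/-- Multivariate normal density with mean `μ` and covariance matrix `S` on `Fin d → ℝ`. -/
noncomputable def mvnPDF {d : ℕ} (μ : Fin d → ℝ) (S : Matrix (Fin d) (Fin d) ℝ)
    (w : Fin d → ℝ) : ℝ :=
  (Real.sqrt ((2 * Real.pi) ^ d * S.det))⁻¹ *
    Real.exp (-(1 / 2) * ((w - μ) ⬝ᵥ (S⁻¹ *ᵥ (w - μ))))

namespace Matrix

variable {n R : Type*} [Fintype n] [CommRing R] {A B : Matrix n n R}

theorem IsSymm.dotProduct_mulVec_comm (hA : A.IsSymm) (u v : n → R) :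
    u ⬝ᵥ A *ᵥ v = v ⬝ᵥ A *ᵥ u := by
  rw [← hA.eq, dotProduct_transpose_mulVec, hA.eq]

variable [DecidableEq n]

theorem mul_inv_add_inv_mul (hA : IsUnit A.det) (hB : IsUnit B.det) :
    B * (A⁻¹ + B⁻¹) * A = A + B := by
  rw [mul_add, mul_nonsing_inv B hB, add_mul, mul_assoc, nonsing_inv_mul A hA, mul_one, one_mul,
    add_comm]

theorem inv_add_eq_inv_mul_inv_add_inv_mul_inv (hA : IsUnit A.det) (hB : IsUnit B.det) :
    (A + B)⁻¹ = A⁻¹ * (A⁻¹ + B⁻¹)⁻¹ * B⁻¹ := by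
  rw [← mul_inv_add_inv_mul hA hB, mul_inv_rev, mul_inv_rev, mul_assoc]

theorem det_add_eq_det_mul_det_inv_add_inv_mul_det (hA : IsUnit A.det) (hB : IsUnit B.det) :
    (A + B).det = B.det * (A⁻¹ + B⁻¹).det * A.det := by
  rw [← mul_inv_add_inv_mul hA hB, det_mul, det_mul]

theorem complete_square_dotProduct_mulVec (hA : A.IsSymm) (hB : B.IsSymm)
    (hAB : IsUnit (A + B).det) (w m μ : n → R) :
    (w - m) ⬝ᵥ A *ᵥ (w - m) + (w - μ) ⬝ᵥ B *ᵥ (w - μ) =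
      (w - (A + B)⁻¹ *ᵥ (A *ᵥ m + B *ᵥ μ)) ⬝ᵥ (A + B) *ᵥ (w - (A + B)⁻¹ *ᵥ (A *ᵥ m + B *ᵥ μ)) +
        (m - μ) ⬝ᵥ (A * (A + B)⁻¹ * B) *ᵥ (m - μ) := by
  set M := A + B
  set u := w - m
  set δ := m - μ
  set v := M⁻¹ *ᵥ (B *ᵥ δ)
  have hMv : M *ᵥ v = B *ᵥ δ := by rw [mulVec_mulVec, mul_nonsing_inv M hAB, one_mulVec]
  have hwμ : w - μ = u + δ := by simp only [u, δ]; abel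
  have hwν : w - M⁻¹ *ᵥ (A *ᵥ m + B *ᵥ μ) = u + v := by
    have : A *ᵥ m + B *ᵥ μ = M *ᵥ m - B *ᵥ δ := by
      simp only [M, δ, add_mulVec, mulVec_sub]; abel
    rw [this, mulVec_sub, mulVec_mulVec, nonsing_inv_mul M hAB, one_mulVec]
    simp only [u]; abel
  have hK : δ ⬝ᵥ (A * M⁻¹ * B) *ᵥ δ + v ⬝ᵥ B *ᵥ δ = δ ⬝ᵥ B *ᵥ δ := by
    rw [hB.dotProduct_mulVec_comm v]
    simp only [v, mulVec_mulVec]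
    rw [← dotProduct_add, ← add_mulVec, ← mul_assoc, ← add_mul, ← add_mul,
      mul_nonsing_inv M hAB, one_mul]
  have hMu : u ⬝ᵥ M *ᵥ u = u ⬝ᵥ A *ᵥ u + u ⬝ᵥ B *ᵥ u := by
    rw [add_mulVec, dotProduct_add]
  have hvMu : v ⬝ᵥ M *ᵥ u = u ⬝ᵥ B *ᵥ δ := by
    rw [(hA.add hB).dotProduct_mulVec_comm, hMv]
  rw [hwμ, hwν]
  simp only [mulVec_add, dotProduct_add, add_dotProduct, hMv, hvMu,
    hB.dotProduct_mulVec_comm δ u]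
  linear_combination -hMu - hK

theorem inv_diagonal_of_ne_zero {K : Type*} [Field K] {v : n → K} (hv : ∀ i, v i ≠ 0) :
    (diagonal v)⁻¹ = diagonal fun i => (v i)⁻¹ :=
  inv_eq_right_inv (by simp [diagonal_mul_diagonal, hv])

end Matrix

section

variable {ι : Type*} [Fintype ι]

theorem integral_comp_mulVec [DecidableEq ι] {A : Matrix ι ι ℝ} (hA : A.det ≠ 0)
    (g : (ι → ℝ) → ℝ) :
    ∫ x, g (A *ᵥ x) = |A.det|⁻¹ * ∫ y, g y := by
  have hA' : IsUnit A := (isUnit_iff_isUnit_det A).mpr hA.isUnit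
  have hemb : MeasurableEmbedding (toLin' A) :=
    (LinearMap.isClosedEmbedding_of_injective
      (LinearMap.ker_eq_bot.mpr (mulVec_injective_iff_isUnit.mpr hA'))).measurableEmbedding
  calc ∫ x, g (A *ᵥ x) = ∫ y, g y ∂(volume.map (toLin' A)) := (hemb.integral_map g).symm
    _ = |A.det|⁻¹ * ∫ y, g y := by
      rw [Real.map_matrix_volume_pi_eq_smul_volume_pi hA, integral_smul_measure,
        ENNReal.toReal_ofReal (by positivity), abs_inv, smul_eq_mul]

theorem integral_exp_neg_half_sum_sq :
    ∫ y : ι → ℝ, exp (-(1 / 2) * ∑ i, y i ^ 2) = √((2 * π) ^ Fintype.card ι) := by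
  simp_rw [Finset.mul_sum, Real.exp_sum]
  rw [integral_fintype_prod_volume_eq_pow (fun t : ℝ => exp (-(1 / 2) * t ^ 2)),
    integral_gaussian, ← Real.sqrt_sq (by positivity : (0 : ℝ) ≤ _ ^ _), ← pow_mul, mul_comm,
    pow_mul, Real.sq_sqrt (by positivity)]
  congr 2
  ring

open scoped MatrixOrder in
theorem integral_exp_neg_half_dotProduct_mulVec [DecidableEq ι] {M : Matrix ι ι ℝ}
    (hM : M.PosDef) :
    ∫ x : ι → ℝ, exp (-(1 / 2) * (x ⬝ᵥ M *ᵥ x)) = √((2 * π) ^ Fintype.card ι / M.det) := by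
  set R := CFC.sqrt M
  have hRR : R * R = M := CFC.sqrt_mul_sqrt_self M hM.posSemidef.nonneg
  have hR : R.IsSymm := by simpa using (CFC.sqrt_nonneg M).posSemidef.isHermitian
  have hdetR : R.det = √M.det := by simpa using hM.posSemidef.det_sqrt
  have hdetR_pos : 0 < R.det := hdetR ▸ Real.sqrt_pos.mpr hM.det_pos
  have hquad (x : ι → ℝ) : x ⬝ᵥ M *ᵥ x = ∑ i, (R *ᵥ x) i ^ 2 := by
    rw [← hRR, ← mulVec_mulVec, ← hR.eq, dotProduct_transpose_mulVec, hR.eq]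
    simp [dotProduct, sq]
  simp_rw [hquad]
  rw [integral_comp_mulVec (g := fun y => exp (-(1 / 2) * ∑ i, y i ^ 2)) hdetR_pos.ne',
    integral_exp_neg_half_sum_sq, abs_of_pos hdetR_pos, hdetR, Real.sqrt_div' _ hM.det_pos.le,
    inv_mul_eq_div]

theorem sum_sq_add_sq_div_sq_eq [DecidableEq ι] {γ : ι → ℝ} (hγ : ∀ k, γ k ≠ 0)
    (w ω ω' : ι → ℝ) :
    ∑ k, ((w k - ω k) ^ 2 + (w k - ω' k) ^ 2) / γ k ^ 2 =
      1 / 2 * ((w - (ω + ω') / 2) ⬝ᵥ (diagonal fun k => γ k ^ 2 / 4)⁻¹ *ᵥ (w - (ω + ω') / 2)) +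
        1 / 8 * ((ω - ω') ⬝ᵥ (diagonal fun k => γ k ^ 2 / 4)⁻¹ *ᵥ (ω - ω')) := by
  rw [inv_diagonal_of_ne_zero fun k => by have hγk := hγ k; positivity]
  simp only [dotProduct, mulVec_diagonal, Pi.sub_apply, Pi.div_apply, Pi.add_apply,
    Pi.ofNat_apply, Finset.mul_sum, ← Finset.sum_add_distrib]
  refine Finset.sum_congr rfl fun k _ => ?_
  have hγk := hγ k
  field_simp
  ring

end

theorem sqrt_mul_mvnPDF {d : ℕ} {S : Matrix (Fin d) (Fin d) ℝ} (hS : 0 < S.det)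
    (m w : Fin d → ℝ) :
    √((2 * π) ^ d * S.det) * mvnPDF m S w = exp (-(1 / 2) * ((w - m) ⬝ᵥ S⁻¹ *ᵥ (w - m))) := by
  rw [mvnPDF, ← mul_assoc, mul_inv_cancel₀ (by positivity), one_mul]

theorem mvnPDF_mul_mvnPDF {d : ℕ} {S₁ S₂ : Matrix (Fin d) (Fin d) ℝ} (h₁ : S₁.PosDef)
    (h₂ : S₂.PosDef) (m μ w : Fin d → ℝ) :
    mvnPDF m S₁ w * mvnPDF μ S₂ w =
      (√((2 * π) ^ d * S₁.det))⁻¹ * (√((2 * π) ^ d * S₂.det))⁻¹ *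
        exp (-(1 / 2) * ((m - μ) ⬝ᵥ (S₁ + S₂)⁻¹ *ᵥ (m - μ))) *
        exp (-(1 / 2) * ((w - (S₁⁻¹ + S₂⁻¹)⁻¹ *ᵥ (S₁⁻¹ *ᵥ m + S₂⁻¹ *ᵥ μ)) ⬝ᵥ
          (S₁⁻¹ + S₂⁻¹) *ᵥ (w - (S₁⁻¹ + S₂⁻¹)⁻¹ *ᵥ (S₁⁻¹ *ᵥ m + S₂⁻¹ *ᵥ μ)))) := by
  have hsq := complete_square_dotProduct_mulVec (by simpa using h₁.inv.isHermitian)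
    (by simpa using h₂.inv.isHermitian) (h₁.inv.add h₂.inv).det_pos.ne'.isUnit w m μ
  rw [← inv_add_eq_inv_mul_inv_add_inv_mul_inv h₁.det_pos.ne'.isUnit h₂.det_pos.ne'.isUnit]
    at hsq
  rw [mvnPDF, mvnPDF, mul_mul_mul_comm, ← exp_add, mul_assoc (_ * _), ← exp_add]
  congr 2
  linear_combination (-1 / 2 : ℝ) * hsq

theorem integral_mvnPDF_mul_mvnPDF {d : ℕ} {S₁ S₂ : Matrix (Fin d) (Fin d) ℝ} (h₁ : S₁.PosDef)
    (h₂ : S₂.PosDef) (m μ : Fin d → ℝ) :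
    ∫ w, mvnPDF m S₁ w * mvnPDF μ S₂ w = mvnPDF μ (S₁ + S₂) m := by
  set P := S₁⁻¹ + S₂⁻¹
  have hP : P.PosDef := h₁.inv.add h₂.inv
  have hdet : (S₁ + S₂).det = S₂.det * P.det * S₁.det :=
    det_add_eq_det_mul_det_inv_add_inv_mul_det h₁.det_pos.ne'.isUnit h₂.det_pos.ne'.isUnit
  have ha : 0 < (2 * π) ^ d * S₁.det := mul_pos (by positivity) h₁.det_pos
  have hb : 0 < (2 * π) ^ d * S₂.det := mul_pos (by positivity) h₂.det_pos
  have hconst : (√((2 * π) ^ d * S₁.det))⁻¹ * (√((2 * π) ^ d * S₂.det))⁻¹ *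
      √((2 * π) ^ d / P.det) = (√((2 * π) ^ d * (S₁ + S₂).det))⁻¹ := by
    have hP0 : P.det ≠ 0 := hP.det_pos.ne'
    rw [hdet, ← Real.sqrt_inv, ← Real.sqrt_inv, ← Real.sqrt_inv,
      ← Real.sqrt_mul (inv_pos.mpr ha).le,
      ← Real.sqrt_mul (mul_pos (inv_pos.mpr ha) (inv_pos.mpr hb)).le]
    congr 1
    field_simp
  simp_rw [mvnPDF_mul_mvnPDF h₁ h₂]
  rw [integral_const_mul, integral_sub_right_eq_self (fun x => exp (-(1 / 2) * (x ⬝ᵥ P *ᵥ x))),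
    integral_exp_neg_half_dotProduct_mulVec hP, Fintype.card_fin, mvnPDF, ← hconst]
  ring

theorem integral_sqExpKernel_sq_mul_mvnPDF_general (d : ℕ)
    (S : Matrix (Fin d) (Fin d) ℝ) (hS : S.PosDef)
    (γ : Fin d → ℝ) (hγ : ∀ k, 0 < γ k)
    (Γmat : Matrix (Fin d) (Fin d) ℝ) (hΓ : Γmat = Matrix.diagonal fun k => γ k ^ 2 / 4)
    (μ ω ω' : Fin d → ℝ) :
    ∫ w : Fin d → ℝ,
        Real.exp (-∑ k, ((w k - ω k) ^ 2 + (w k - ω' k) ^ 2) / γ k ^ 2) * mvnPDF μ S w =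
      (Real.sqrt (((Γmat + S) * Γmat⁻¹).det))⁻¹ *
        Real.exp (-(1 / 8) * ((ω - ω') ⬝ᵥ (Γmat⁻¹ *ᵥ (ω - ω')))) *
        Real.exp (-(1 / 2) *
          (((ω + ω') / 2 - μ) ⬝ᵥ ((Γmat + S)⁻¹ *ᵥ ((ω + ω') / 2 - μ)))) := by
  have hΓpd : Γmat.PosDef := hΓ ▸ PosDef.diagonal fun k => by have hγk := hγ k; positivity
  set c := √((2 * π) ^ d * Γmat.det)
  have hkernel (w : Fin d → ℝ) :
      exp (-∑ k, ((w k - ω k) ^ 2 + (w k - ω' k) ^ 2) / γ k ^ 2) =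
        exp (-(1 / 8) * ((ω - ω') ⬝ᵥ Γmat⁻¹ *ᵥ (ω - ω'))) * c * mvnPDF ((ω + ω') / 2) Γmat w := by
    rw [mul_assoc, sqrt_mul_mvnPDF hΓpd.det_pos, ← exp_add,
      sum_sq_add_sq_div_sq_eq (fun k => (hγ k).ne'), ← hΓ]
    congr 1
    ring
  have hc : c * (√((2 * π) ^ d * (Γmat + S).det))⁻¹ = (√((Γmat + S) * Γmat⁻¹).det)⁻¹ := by
    have hΓS : (Γmat + S).det ≠ 0 := (hΓpd.add hS).det_pos.ne'
    have hΓ0 : Γmat.det ≠ 0 := hΓpd.det_pos.ne'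
    rw [det_mul, det_nonsing_inv, Ring.inverse_eq_inv', ← Real.sqrt_inv, ← Real.sqrt_inv,
      ← Real.sqrt_mul (mul_pos (by positivity) hΓpd.det_pos).le]
    congr 1
    field_simp
  simp_rw [hkernel, mul_assoc]
  rw [integral_const_mul, integral_const_mul, integral_mvnPDF_mul_mvnPDF hΓpd hS, mvnPDF, ← hc]
  ring

theorem integral_sqExpKernel_sq_mul_mvnPDF (d : ℕ) (hd : 1 ≤ d)
    (S : Matrix (Fin d) (Fin d) ℝ) (hS : S.PosDef)
    (γ : Fin d → ℝ) (hγ : ∀ k, 0 < γ k)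
    (Γmat : Matrix (Fin d) (Fin d) ℝ) (hΓ : Γmat = Matrix.diagonal fun k => γ k ^ 2 / 4)
    (μ ω ω' : Fin d → ℝ) :
    ∫ w : Fin d → ℝ,
        Real.exp (-∑ k, ((w k - ω k) ^ 2 + (w k - ω' k) ^ 2) / γ k ^ 2) * mvnPDF μ S w =
      (Real.sqrt (((Γmat + S) * Γmat⁻¹).det))⁻¹ *
        Real.exp (-(1 / 8) * ((ω - ω') ⬝ᵥ (Γmat⁻¹ *ᵥ (ω - ω')))) *
        Real.exp (-(1 / 2) *
          (((ω + ω') / 2 - μ) ⬝ᵥ ((Γmat + S)⁻¹ *ᵥ ((ω + ω') / 2 - μ)))) :=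
  integral_sqExpKernel_sq_mul_mvnPDF_general d S hS γ hγ Γmat hΓ μ ω ω'
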